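/- Let n ≥ 1 and let B, A₁, A₂ be symmetric real n×n matrices with B positive definite and A₁, A₂ positive semidefinite. Set A = A₁ + A₂, let τ > 0 and σ ≥ 1/2. If sequences y : ℕ → ℝⁿ and φ : ℕ → ℝⁿ satisfy (B + στA₁) B⁻¹ (B + στA₂) ((y(k+1) − y(k))/τ) + A y(k) = φ(k) for every k ∈ ℕ, then for every N ∈ ℕ one has ‖(B + στA₂) y(N)‖_{B⁻¹} ≤ ‖(B + στA₂) y(0)‖_{B⁻¹} + τ Σ_{k=0}^{N−1} ‖φ(k)‖_{B⁻¹}. -/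

import Mathlib

open Matrix

/-- The `B⁻¹`-weighted norm `‖x‖_{B⁻¹} = √(xᵀ B⁻¹ x)`. -/
noncomputable def normBinv {n : ℕ} (B : Matrix (Fin n) (Fin n) ℝ) (x : Fin n → ℝ) : ℝ :=
  Real.sqrt (x ⬝ᵥ B⁻¹ *ᵥ x)

/-!
Write `S = B + στA₁` and `T = B + στA₂`. One step of the scheme reads
`T y(k+1) = (T y(k) - τ B v) + τ B ψ` with `S v = A y(k)` and `S ψ = φ(k)`.
In the `B⁻¹`-norm the first summand is no longer than `T y(k)`, because
`⟨T y, v⟩ - στ ⟨B v, v⟩ = ⟨A₁ (y - στ v), y - στ v⟩ + ⟨A₂ y, y⟩ ≥ 0` and `τ ≤ 2στ`;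
the second has norm at most `τ ‖φ(k)‖`, because `‖S ψ‖² = ‖B ψ‖² + 2στ ⟨A₁ ψ, ψ⟩ + (στ)² ‖A₁ ψ‖²`.
Summing the one-step estimates gives the bound.
-/

theorem le_add_sum_range_of_le_add {α : Type*} [AddCommMonoid α] [PartialOrder α]
    [IsOrderedAddMonoid α] {a b : ℕ → α} (h : ∀ k, a (k + 1) ≤ a k + b k) (N : ℕ) :
    a N ≤ a 0 + ∑ k ∈ Finset.range N, b k := by
  induction N with
  | zero => simp
  | succ N ih =>
    rw [Finset.sum_range_succ, ← add_assoc]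
    exact (h N).trans (add_le_add_left ih _)

namespace Matrix

variable {ι : Type*} [Fintype ι]

theorem IsHermitian.dotProduct_mulVec_comm {M : Matrix ι ι ℝ} (hM : M.IsHermitian)
    (x z : ι → ℝ) : x ⬝ᵥ M *ᵥ z = z ⬝ᵥ M *ᵥ x := by
  rw [dotProduct_mulVec, dotProduct_comm, ← mulVec_transpose,
    ← conjTranspose_eq_transpose_of_trivial, hM.eq]

theorem PosSemidef.sqrt_dotProduct_mulVec_add_le {M : Matrix ι ι ℝ} (hM : M.PosSemidef)
    (x z : ι → ℝ) :
    √((x + z) ⬝ᵥ M *ᵥ (x + z)) ≤ √(x ⬝ᵥ M *ᵥ x) + √(z ⬝ᵥ M *ᵥ z) := by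
  have hnorm (u : ι → ℝ) :
      @norm _ (M.toSeminormedAddCommGroup hM).toNorm u = √(u ⬝ᵥ M *ᵥ u) := by
    -- this norm is `√((M *ᵥ u) ⬝ᵥ star u)` by definition
    rw [dotProduct_comm]
    rfl
  simpa only [hnorm] using @norm_add_le _ (M.toSeminormedAddCommGroup hM).toSeminormedAddGroup x z

theorem add_smul_mulVec_dotProduct_sub_eq {B A₁ A₂ : Matrix ι ι ℝ} (hB : B.IsHermitian)
    (hA₂ : A₂.IsHermitian) {s : ℝ} {y v : ι → ℝ}
    (hv : (B + s • A₁) *ᵥ v = (A₁ + A₂) *ᵥ y) :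
    ((B + s • A₂) *ᵥ y) ⬝ᵥ v - s * (v ⬝ᵥ B *ᵥ v)
      = (y - s • v) ⬝ᵥ A₁ *ᵥ (y - s • v) + y ⬝ᵥ A₂ *ᵥ y := by
  have hy := congrArg (y ⬝ᵥ ·) hv
  have hvv := congrArg (v ⬝ᵥ ·) hv
  simp only [add_mulVec, smul_mulVec, mulVec_sub, mulVec_smul, dotProduct_add, add_dotProduct,
    dotProduct_sub, sub_dotProduct, dotProduct_smul, smul_dotProduct, smul_eq_mul] at hy hvv ⊢
  rw [dotProduct_comm _ v, dotProduct_comm _ v, hB.dotProduct_mulVec_comm v,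
    hA₂.dotProduct_mulVec_comm v] at *
  linear_combination hy - s * hvv

variable [DecidableEq ι]

theorem dotProduct_inv_mulVec_mulVec {B : Matrix ι ι ℝ} (hB : IsUnit B.det) (x z : ι → ℝ) :
    x ⬝ᵥ B⁻¹ *ᵥ (B *ᵥ z) = x ⬝ᵥ z := by
  rw [mulVec_mulVec, nonsing_inv_mul B hB, one_mulVec]

theorem mulVec_dotProduct_inv_mulVec {B : Matrix ι ι ℝ} (hB : B.PosDef) (x z : ι → ℝ) :
    (B *ᵥ x) ⬝ᵥ B⁻¹ *ᵥ z = x ⬝ᵥ z := by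
  rw [hB.inv.isHermitian.dotProduct_mulVec_comm,
    dotProduct_inv_mulVec_mulVec hB.det_pos.ne'.isUnit, dotProduct_comm]

theorem mulVec_eq_of_mul_inv_mul_mulVec_eq {B S T : Matrix ι ι ℝ} (hB : IsUnit B.det)
    (hS : IsUnit S.det) {d f : ι → ℝ} (h : (S * B⁻¹ * T) *ᵥ d = f) :
    T *ᵥ d = B *ᵥ (S⁻¹ *ᵥ f) := by
  simp only [← h, mulVec_mulVec, Matrix.mul_assoc, nonsing_inv_mul_cancel_left _ _ hS,
    mul_nonsing_inv_cancel_left _ _ hB]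

theorem sub_smul_mulVec_dotProduct_inv_mulVec_self_le {B A₁ A₂ : Matrix ι ι ℝ} (hB : B.PosDef)
    (hA₁ : A₁.PosSemidef) (hA₂ : A₂.PosSemidef) {s τ : ℝ} (hτ : 0 ≤ τ) (hτs : τ ≤ 2 * s)
    {y v : ι → ℝ} (hv : (B + s • A₁) *ᵥ v = (A₁ + A₂) *ᵥ y) :
    ((B + s • A₂) *ᵥ y - τ • B *ᵥ v) ⬝ᵥ B⁻¹ *ᵥ ((B + s • A₂) *ᵥ y - τ • B *ᵥ v)
      ≤ ((B + s • A₂) *ᵥ y) ⬝ᵥ B⁻¹ *ᵥ ((B + s • A₂) *ᵥ y) := by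
  set w := (B + s • A₂) *ᵥ y
  have hexpand : (w - τ • B *ᵥ v) ⬝ᵥ B⁻¹ *ᵥ (w - τ • B *ᵥ v)
      = w ⬝ᵥ B⁻¹ *ᵥ w - τ * (2 * (w ⬝ᵥ v) - τ * (v ⬝ᵥ B *ᵥ v)) := by
    simp only [mulVec_sub, mulVec_smul, dotProduct_sub, sub_dotProduct, dotProduct_smul,
      smul_dotProduct, smul_eq_mul, dotProduct_inv_mulVec_mulVec hB.det_pos.ne'.isUnit,
      mulVec_dotProduct_inv_mulVec hB]
    rw [dotProduct_comm v w, dotProduct_comm (B *ᵥ v)]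
    ring
  have hvBv : 0 ≤ v ⬝ᵥ B *ᵥ v := hB.posSemidef.dotProduct_mulVec_nonneg v
  have hkey : τ * (v ⬝ᵥ B *ᵥ v) ≤ 2 * (w ⬝ᵥ v) := by
    have henergy : w ⬝ᵥ v - s * (v ⬝ᵥ B *ᵥ v) = _ :=
      add_smul_mulVec_dotProduct_sub_eq hB.isHermitian hA₂.isHermitian hv
    have h₁ : 0 ≤ (y - s • v) ⬝ᵥ A₁ *ᵥ (y - s • v) := hA₁.dotProduct_mulVec_nonneg _
    have h₂ : 0 ≤ y ⬝ᵥ A₂ *ᵥ y := hA₂.dotProduct_mulVec_nonneg _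
    linarith [mul_le_mul_of_nonneg_right hτs hvBv]
  rw [hexpand]
  linarith [mul_nonneg hτ (sub_nonneg.mpr hkey)]

theorem mulVec_dotProduct_inv_mulVec_self_le {B A₁ : Matrix ι ι ℝ} (hB : B.PosDef)
    (hA₁ : A₁.PosSemidef) {s : ℝ} (hs : 0 ≤ s) (ψ : ι → ℝ) :
    (B *ᵥ ψ) ⬝ᵥ B⁻¹ *ᵥ (B *ᵥ ψ) ≤ ((B + s • A₁) *ᵥ ψ) ⬝ᵥ B⁻¹ *ᵥ ((B + s • A₁) *ᵥ ψ) := by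
  have hexpand : ((B + s • A₁) *ᵥ ψ) ⬝ᵥ B⁻¹ *ᵥ ((B + s • A₁) *ᵥ ψ)
      = (B *ᵥ ψ) ⬝ᵥ B⁻¹ *ᵥ (B *ᵥ ψ)
        + s * (2 * (ψ ⬝ᵥ A₁ *ᵥ ψ) + s * ((A₁ *ᵥ ψ) ⬝ᵥ B⁻¹ *ᵥ (A₁ *ᵥ ψ))) := by
    simp only [add_mulVec, smul_mulVec, mulVec_add, mulVec_smul, dotProduct_add, add_dotProduct,
      dotProduct_smul, smul_dotProduct, smul_eq_mul, mulVec_dotProduct_inv_mulVec hB,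
      dotProduct_inv_mulVec_mulVec hB.det_pos.ne'.isUnit]
    rw [dotProduct_comm (A₁ *ᵥ ψ), dotProduct_comm (B *ᵥ ψ) ψ]
    ring
  have h₁ : 0 ≤ ψ ⬝ᵥ A₁ *ᵥ ψ := hA₁.dotProduct_mulVec_nonneg _
  have h₂ : 0 ≤ (A₁ *ᵥ ψ) ⬝ᵥ B⁻¹ *ᵥ (A₁ *ᵥ ψ) := hB.posSemidef.inv.dotProduct_mulVec_nonneg _
  rw [hexpand]
  exact le_add_of_nonneg_right (by positivity)

end Matrix

section normBinv

variable {n : ℕ}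

theorem normBinv_add_le {B : Matrix (Fin n) (Fin n) ℝ} (hB : B.PosSemidef) (x z : Fin n → ℝ) :
    normBinv B (x + z) ≤ normBinv B x + normBinv B z :=
  hB.inv.sqrt_dotProduct_mulVec_add_le x z

theorem normBinv_smul (B : Matrix (Fin n) (Fin n) ℝ) (c : ℝ) (x : Fin n → ℝ) :
    normBinv B (c • x) = |c| * normBinv B x := by
  rw [normBinv, normBinv, mulVec_smul, dotProduct_smul, smul_dotProduct, smul_eq_mul,
    smul_eq_mul, ← mul_assoc, ← sq, Real.sqrt_mul (sq_nonneg c), Real.sqrt_sq_eq_abs]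

theorem normBinv_step_le {B A₁ A₂ : Matrix (Fin n) (Fin n) ℝ} (hB : B.PosDef)
    (hA₁ : A₁.PosSemidef) (hA₂ : A₂.PosSemidef) {τ σ : ℝ} (hτ : 0 < τ) (hσ : 1 / 2 ≤ σ)
    {y y' φ : Fin n → ℝ}
    (hscheme : ((B + (σ * τ) • A₁) * B⁻¹ * (B + (σ * τ) • A₂)) *ᵥ ((1 / τ) • (y' - y))
        + (A₁ + A₂) *ᵥ y = φ) :
    normBinv B ((B + (σ * τ) • A₂) *ᵥ y')
      ≤ normBinv B ((B + (σ * τ) • A₂) *ᵥ y) + τ * normBinv B φ := by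
  set s := σ * τ
  set S := B + s • A₁
  set T := B + s • A₂
  have hs : 0 ≤ s := by positivity
  have hτs : τ ≤ 2 * s := by nlinarith
  have hS : IsUnit S.det := (hB.add_posSemidef (hA₁.smul hs)).det_pos.ne'.isUnit
  set v := S⁻¹ *ᵥ ((A₁ + A₂) *ᵥ y)
  set ψ := S⁻¹ *ᵥ φ
  have hS_cancel (u : Fin n → ℝ) : S *ᵥ (S⁻¹ *ᵥ u) = u := by
    rw [mulVec_mulVec, mul_nonsing_inv _ hS, one_mulVec]
  have hupdate : T *ᵥ y' = (T *ᵥ y - τ • B *ᵥ v) + τ • B *ᵥ ψ := by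
    have h := mulVec_eq_of_mul_inv_mul_mulVec_eq hB.det_pos.ne'.isUnit hS
      (eq_sub_of_add_eq hscheme)
    rw [mulVec_smul, mulVec_sub, mulVec_sub, mulVec_sub] at h
    have hdiff : T *ᵥ y' - T *ᵥ y = τ • (B *ᵥ ψ - B *ᵥ v) := by
      rw [← h, smul_smul, mul_one_div_cancel hτ.ne', one_smul]
    rw [sub_eq_iff_eq_add'.mp hdiff, smul_sub]
    abel
  calc normBinv B (T *ᵥ y') = normBinv B ((T *ᵥ y - τ • B *ᵥ v) + τ • B *ᵥ ψ) := by
        rw [hupdate]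
    _ ≤ normBinv B (T *ᵥ y - τ • B *ᵥ v) + normBinv B (τ • B *ᵥ ψ) :=
        normBinv_add_le hB.posSemidef _ _
    _ ≤ normBinv B (T *ᵥ y) + τ * normBinv B φ := by
        rw [normBinv_smul, abs_of_pos hτ]
        gcongr
        · exact Real.sqrt_le_sqrt <|
            sub_smul_mulVec_dotProduct_inv_mulVec_self_le hB hA₁ hA₂ hτ.le hτs (hS_cancel _)
        · rw [← hS_cancel φ]
          exact Real.sqrt_le_sqrt <| mulVec_dotProduct_inv_mulVec_self_le hB hA₁ hs ψ

end normBinv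

theorem factorized_scheme_multi_level_stability_general
    {n : ℕ}
    (B A₁ A₂ : Matrix (Fin n) (Fin n) ℝ)
    (hB : B.PosDef) (hA₁ : A₁.PosSemidef) (hA₂ : A₂.PosSemidef)
    (A : Matrix (Fin n) (Fin n) ℝ) (hA : A = A₁ + A₂)
    (τ σ : ℝ) (hτ : 0 < τ) (hσ : 1 / 2 ≤ σ)
    (y φ : ℕ → Fin n → ℝ)
    (hscheme : ∀ k : ℕ,
      ((B + (σ * τ) • A₁) * B⁻¹ * (B + (σ * τ) • A₂)) *ᵥ ((1 / τ) • (y (k + 1) - y k))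
        + A *ᵥ y k = φ k) :
    ∀ N : ℕ,
      normBinv B ((B + (σ * τ) • A₂) *ᵥ y N)
        ≤ normBinv B ((B + (σ * τ) • A₂) *ᵥ y 0)
          + τ * ∑ k ∈ Finset.range N, normBinv B (φ k) := by
  subst hA
  intro N
  rw [Finset.mul_sum]
  exact le_add_sum_range_of_le_add (a := fun k ↦ normBinv B ((B + (σ * τ) • A₂) *ᵥ y k))
    (fun k ↦ normBinv_step_le hB hA₁ hA₂ hτ hσ (hscheme k)) N

theorem factorized_scheme_multi_level_stability
    {n : ℕ} (hn : 1 ≤ n)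
    (B A₁ A₂ : Matrix (Fin n) (Fin n) ℝ)
    (hB : B.PosDef) (hA₁ : A₁.PosSemidef) (hA₂ : A₂.PosSemidef)
    (A : Matrix (Fin n) (Fin n) ℝ) (hA : A = A₁ + A₂)
    (τ σ : ℝ) (hτ : 0 < τ) (hσ : 1 / 2 ≤ σ)
    (y φ : ℕ → Fin n → ℝ)
    (hscheme : ∀ k : ℕ,
      ((B + (σ * τ) • A₁) * B⁻¹ * (B + (σ * τ) • A₂)) *ᵥ ((1 / τ) • (y (k + 1) - y k))
        + A *ᵥ y k = φ k) :
    ∀ N : ℕ,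
      normBinv B ((B + (σ * τ) • A₂) *ᵥ y N)
        ≤ normBinv B ((B + (σ * τ) • A₂) *ᵥ y 0)
          + τ * ∑ k ∈ Finset.range N, normBinv B (φ k) :=
  factorized_scheme_multi_level_stability_general B A₁ A₂ hB hA₁ hA₂ A hA τ σ hτ hσ y φ hscheme
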